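/- Let X solve dX(t) = b(X(t))dt + σ(t)dB^H(t), X(0) = x ∈ ℝ^d, with H > 1/2, under hypotheses (H1) and (H2). Choose λ_0 with 1 − α_0 < λ_0 < H and λ_0 β_0 > H − 1/2. Then there is a constant C(T) such that for all s,t ∈ [0,T]: |X_t − X_s| ≤ C { [1 + e^{KT}(|x| + T)]|t−s| + e^{KT} ||B^H||_{λ_0}(T^{λ_0} + T^{λ_0+α_0})|t−s| + ||B^H||_{λ_0}(|t−s|^{λ_0} + |t−s|^{λ_0+α_0}) } ≤ C(T)(|t−s| + ||B^H||_{λ_0}|t−s|^{λ_0}), where ||·||_{λ_0} is the λ_0-Hölder seminorm on [0,T]. -/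

import Mathlib

open MeasureTheory ProbabilityTheory Real Filter Set
open scoped BigOperators ENNReal NNReal InnerProductSpace

noncomputable section

abbrev Vec (d : ℕ) := EuclideanSpace ℝ (Fin d)

/-- Covariance function of fractional Brownian motion with Hurst parameter `H`. -/
def fbmCov (H t s : ℝ) : ℝ := (|t| ^ (2*H) + |s| ^ (2*H) - |t - s| ^ (2*H)) / 2

/-- `B` is a `d`-dimensional fractional Brownian motion with Hurst parameter `H`
under the probability measure `μ`: a centered Gaussian process with continuous paths and
covariance `E[B_t^i B_s^j] = R_H(t,s) δ_{ij}`. -/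
def IsFBM {Ω : Type*} [MeasurableSpace Ω] (μ : Measure Ω) (d : ℕ) (H : ℝ)
    (B : ℝ → Ω → Vec d) : Prop :=
  (∀ t, Measurable (B t)) ∧
  (∀ ω, Continuous fun t => B t ω) ∧
  (∀ ω, B 0 ω = 0) ∧
  (∀ (i : Fin d) (t : ℝ), ∫ ω, B t ω i ∂μ = 0) ∧
  (∀ (i j : Fin d) (t s : ℝ), ∫ ω, B t ω i * B s ω j ∂μ = if i = j then fbmCov H t s else 0) ∧
  (∀ (n : ℕ) (c : Fin n → ℝ) (ts : Fin n → ℝ) (idx : Fin n → Fin d), ∃ v : NNReal,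
    μ.map (fun ω => ∑ k, c k * B (ts k) ω (idx k)) = gaussianReal 0 v)

/-- Riemann–Stieltjes sum of `σ` against the path `g` along the partition `p`. -/
def rsSum {d : ℕ} (σ : ℝ → Vec d →L[ℝ] Vec d) (g : ℝ → Vec d) (n : ℕ) (p : ℕ → ℝ) : Vec d :=
  ∑ k ∈ Finset.range n, σ (p k) (g (p (k+1)) - g (p k))

/-- `I` is the (Young/Riemann–Stieltjes) integral `∫_a^b σ(s) dg(s)`. -/
def IsRSIntegral {d : ℕ} (σ : ℝ → Vec d →L[ℝ] Vec d) (g : ℝ → Vec d) (a b : ℝ)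
    (I : Vec d) : Prop :=
  ∀ ε > 0, ∃ δ > 0, ∀ (n : ℕ) (p : ℕ → ℝ), p 0 = a → p n = b →
    (∀ k < n, p k < p (k+1)) → (∀ k < n, p (k+1) - p k < δ) →
    ‖rsSum σ g n p - I‖ < ε

/-- `X` solves the SDE `dX(t) = b(X(t))dt + σ(t) dB^H(t)`, `X(0) = x`, pathwise on `[0,T]`,
the noise integral being understood in the Riemann–Stieltjes (Young) sense. -/
def SolvesSDE {Ω : Type*} {d : ℕ} (T : ℝ) (b : Vec d → Vec d) (σ : ℝ → Vec d →L[ℝ] Vec d)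
    (B : ℝ → Ω → Vec d) (x : Vec d) (X : ℝ → Ω → Vec d) : Prop :=
  ∀ ω, (Continuous fun t => X t ω) ∧ X 0 ω = x ∧
    ∀ t ∈ Set.Icc (0:ℝ) T, ∃ I, IsRSIntegral σ (fun s => B s ω) 0 t I ∧
      X t ω = x + (∫ s in (0:ℝ)..t, b (X s ω)) + I

/-- λ-Hölder seminorm of a path on `[0,T]`. -/
def holderSemi {d : ℕ} (lam T : ℝ) (f : ℝ → Vec d) : ℝ :=
  sSup {r : ℝ | ∃ s t : ℝ, 0 ≤ s ∧ s < t ∧ t ≤ T ∧ r = ‖f t - f s‖ / (t - s) ^ lam}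

/-- Natural filtration of a process. -/
def natFilt {Ω : Type*} [MeasurableSpace Ω] {d : ℕ} (W : ℝ → Ω → Vec d) (t : ℝ) :
    MeasurableSpace Ω :=
  ⨆ s ∈ Set.Icc (0:ℝ) t, MeasurableSpace.comap (W s) inferInstance

/-- An abstract packaging of the Malliavin calculus associated with a `d`-dimensional
fractional Brownian motion on `[0,T]`: the Hilbert space `𝓗` (closure of step functions
under the fBm covariance inner product, `emb` embedding functions into `𝓗`), the kernel
`K_H`, the isometry `K_H^*`, the operator `R_H = K_H ∘ K_H^*`, the Sobolev space `𝔻^{1,2}`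
with Malliavin derivative `MD`, and the divergence `dvg = δ` with its domain, linked by the
integration-by-parts duality. -/
structure MalliavinStructure (Ω : Type*) [MeasurableSpace Ω] (μ : Measure Ω)
    (d : ℕ) (T : ℝ) (𝓗 : Type*) [NormedAddCommGroup 𝓗] [InnerProductSpace ℝ 𝓗] where
  emb : (ℝ → Vec d) → 𝓗
  KH : ℝ → ℝ → ℝ
  KHstar : 𝓗 → ℝ → Vec d
  RH : 𝓗 → ℝ → Vec d
  D12 : Set (Ω → ℝ)
  MD : (Ω → ℝ) → Ω → 𝓗
  domδ : Set (Ω → 𝓗)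
  dvg : (Ω → 𝓗) → Ω → ℝ
  KHstar_isometry : ∀ g h : 𝓗, ⟪g, h⟫_ℝ = ∫ s in (0:ℝ)..T, ⟪KHstar g s, KHstar h s⟫_ℝ
  RH_eq : ∀ g t, RH g t = ∫ s in (0:ℝ)..t, KH t s • KHstar g s
  duality : ∀ F ∈ D12, ∀ u ∈ domδ,
    ∫ ω, ⟪MD F ω, u ω⟫_ℝ ∂μ = ∫ ω, F ω * dvg u ω ∂μ

/-- The element `Σ_j (σ_{ij} 1_{[0,t]}) e^j` of (the function representation of) `𝓗`. -/
def sigmaRow {d : ℕ} (σ : ℝ → Vec d →L[ℝ] Vec d) (i : Fin d) (t : ℝ) : ℝ → Vec d :=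
  fun s => Set.indicator (Set.Icc (0:ℝ) t)
    (fun s' => ∑ j, (σ s' (EuclideanSpace.single j 1) i) • EuclideanSpace.single j (1:ℝ)) s

/-!
The noise term is controlled pathwise by the Young–Loève estimate. The coefficient `σ` inherits
the `α₀`-Hölder continuity of `σ⁻¹`, and `λ₀ + α₀ > 1`; erasing the nodes of a partition of
`[s, t]` one at a time, each time the one whose neighbours are closest, costs at most
`‖σ‖_{α₀} ‖B‖_{λ₀} (2|t - s| / n)^{λ₀ + α₀}` at the step with `n + 1` intervals left, so
`∫ₛᵗ σ dB - σ(s)(B_t - B_s)` is bounded by `2^{λ₀+α₀} ζ(λ₀+α₀) ‖σ‖_{α₀} ‖B‖_{λ₀} |t - s|^{λ₀+α₀}`.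
With a `K`-Lipschitz drift, Grönwall's inequality then bounds `|X - x|` on `[0, T]` by
`e^{KT}(|b(x)| T + noise)`, so the drift contributes a Lipschitz term, and
`|t - s| ≤ T^{1-λ₀} |t - s|^{λ₀}` gives the second form.
-/

section Partition

variable {d : ℕ} {σ : ℝ → Vec d →L[ℝ] Vec d} {g : ℝ → Vec d}

lemma partition_mem_Icc {p : ℕ → ℝ} {n k : ℕ} (hp : ∀ k < n, p k < p (k + 1)) (hk : k ≤ n) :
    p k ∈ Icc (p 0) (p n) := by
  have hmono := (strictMonoOn_Iic_of_lt_succ (ψ := p) (n := n) fun m hm => by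
    simpa using hp m hm).monotoneOn
  exact ⟨hmono (Nat.zero_le n) hk (Nat.zero_le k), hmono hk (le_refl n) hk⟩

lemma rsSum_succ (n : ℕ) (p : ℕ → ℝ) :
    rsSum σ g (n + 1) p = rsSum σ g n p + σ (p n) (g (p (n + 1)) - g (p n)) :=
  Finset.sum_range_succ _ _

lemma rsSum_congr {n : ℕ} {p q : ℕ → ℝ} (h : ∀ k ≤ n, p k = q k) :
    rsSum σ g n p = rsSum σ g n q :=
  Finset.sum_congr rfl fun k hk => by
    rw [h k (Finset.mem_range.1 hk).le, h (k + 1) (Finset.mem_range.1 hk)]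

def eraseNode (p : ℕ → ℝ) (j : ℕ) : ℕ → ℝ := fun i => if i < j then p i else p (i + 1)

lemma eraseNode_of_lt {p : ℕ → ℝ} {i j : ℕ} (h : i < j) : eraseNode p j i = p i := if_pos h

lemma eraseNode_of_le {p : ℕ → ℝ} {i j : ℕ} (h : j ≤ i) : eraseNode p j i = p (i + 1) :=
  if_neg (not_lt.2 h)

lemma eraseNode_lt_succ {p : ℕ → ℝ} {n j : ℕ} (hp : ∀ k < n + 1, p k < p (k + 1)) :
    ∀ k < n, eraseNode p j k < eraseNode p j (k + 1) := by
  intro k hk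
  rcases lt_trichotomy (k + 1) j with h | h | h
  · rw [eraseNode_of_lt h, eraseNode_of_lt (by omega)]
    exact hp k (by omega)
  · rw [eraseNode_of_le h.ge, eraseNode_of_lt (by omega)]
    exact (hp k (by omega)).trans (hp (k + 1) (by omega))
  · rw [eraseNode_of_le h.le, eraseNode_of_le (by omega)]
    exact hp (k + 1) (by omega)

lemma rsSum_eq_rsSum_eraseNode_add (p : ℕ → ℝ) (j m : ℕ) :
    rsSum σ g (j + m + 2) p = rsSum σ g (j + m + 1) (eraseNode p (j + 1))
      + (σ (p (j + 1)) - σ (p j)) (g (p (j + 2)) - g (p (j + 1))) := by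
  induction m with
  | zero =>
    have hj : rsSum σ g j (eraseNode p (j + 1)) = rsSum σ g j p :=
      rsSum_congr fun k hk => eraseNode_of_lt (by omega)
    rw [add_zero, rsSum_succ, rsSum_succ, rsSum_succ, hj, eraseNode_of_lt (Nat.lt_succ_self j),
      eraseNode_of_le (le_refl (j + 1))]
    simp only [map_sub, sub_apply]
    abel
  | succ m ih =>
    rw [show j + (m + 1) + 2 = j + m + 2 + 1 by omega,
      show j + (m + 1) + 1 = j + m + 1 + 1 by omega, rsSum_succ, ih, rsSum_succ (j + m + 1),
      eraseNode_of_le (by omega : j + 1 ≤ j + m + 1),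
      eraseNode_of_le (by omega : j + 1 ≤ j + m + 1 + 1)]
    abel

lemma exists_two_step_le {p : ℕ → ℝ} {n : ℕ} (hp : ∀ k < n + 2, p k < p (k + 1)) :
    ∃ j < n + 1, p (j + 2) - p j ≤ 2 * (p (n + 2) - p 0) / (n + 1) := by
  have hsum : ∑ j ∈ Finset.range (n + 1), (p (j + 2) - p j)
      = (p (n + 2) - p 1) + (p (n + 1) - p 0) := by
    rw [← Finset.sum_range_sub (fun i => p (i + 1)), ← Finset.sum_range_sub p,
      ← Finset.sum_add_distrib]
    exact Finset.sum_congr rfl fun j _ => by ring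
  obtain ⟨j, hj, hle⟩ := Finset.exists_le_of_sum_le (s := Finset.range (n + 1))
    (f := fun j => p (j + 2) - p j) (g := fun _ => 2 * (p (n + 2) - p 0) / (n + 1))
    Finset.nonempty_range_add_one (by
      rw [Finset.sum_const, Finset.card_range, nsmul_eq_mul, hsum, Nat.cast_add_one,
        mul_div_cancel₀ _ (by positivity)]
      linarith [hp 0 (by omega), hp (n + 1) (by omega)])
  exact ⟨j, Finset.mem_range.1 hj, hle⟩

end Partition

section Young

variable {d : ℕ} {σ : ℝ → Vec d →L[ℝ] Vec d} {g : ℝ → Vec d} {a b Hσ Λ lam α : ℝ}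

lemma norm_sub_apply_sub_le
    (hσ : ∀ s ∈ Icc a b, ∀ t ∈ Icc a b, ‖σ t - σ s‖ ≤ Hσ * |t - s| ^ α)
    (hg : ∀ s ∈ Icc a b, ∀ t ∈ Icc a b, ‖g t - g s‖ ≤ Λ * |t - s| ^ lam)
    (hHσ : 0 ≤ Hσ) (hΛ : 0 ≤ Λ) (hα : 0 ≤ α) (hlam : 0 ≤ lam)
    {u v w : ℝ} (hu : a ≤ u) (huv : u ≤ v) (hvw : v ≤ w) (hw : w ≤ b) :
    ‖(σ v - σ u) (g w - g v)‖ ≤ Hσ * Λ * (w - u) ^ (lam + α) := by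
  have hσuv : ‖σ v - σ u‖ ≤ Hσ * (w - u) ^ α := by
    refine (hσ u ⟨hu, by linarith⟩ v ⟨by linarith, by linarith⟩).trans ?_
    gcongr
    rw [abs_of_nonneg (by linarith)]
    linarith
  have hgvw : ‖g w - g v‖ ≤ Λ * (w - u) ^ lam := by
    refine (hg v ⟨by linarith, by linarith⟩ w ⟨by linarith, hw⟩).trans ?_
    gcongr
    rw [abs_of_nonneg (by linarith)]
    linarith
  calc ‖(σ v - σ u) (g w - g v)‖ ≤ ‖σ v - σ u‖ * ‖g w - g v‖ := ContinuousLinearMap.le_opNorm _ _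
    _ ≤ Hσ * (w - u) ^ α * (Λ * (w - u) ^ lam) :=
      mul_le_mul hσuv hgvw (norm_nonneg _) ((norm_nonneg _).trans hσuv)
    _ = Hσ * Λ * (w - u) ^ (lam + α) := by
      rw [Real.rpow_add_of_nonneg (by linarith) hlam hα]; ring

lemma norm_rsSum_sub_le
    (hσ : ∀ s ∈ Icc a b, ∀ t ∈ Icc a b, ‖σ t - σ s‖ ≤ Hσ * |t - s| ^ α)
    (hg : ∀ s ∈ Icc a b, ∀ t ∈ Icc a b, ‖g t - g s‖ ≤ Λ * |t - s| ^ lam)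
    (hHσ : 0 ≤ Hσ) (hΛ : 0 ≤ Λ) (hα : 0 ≤ α) (hlam : 0 ≤ lam) (n : ℕ) (p : ℕ → ℝ)
    (h0 : p 0 = a) (hn : p (n + 1) = b) (hp : ∀ k < n + 1, p k < p (k + 1)) :
    ‖rsSum σ g (n + 1) p - σ a (g b - g a)‖
      ≤ Hσ * Λ * (2 * (b - a)) ^ (lam + α)
          * ∑ m ∈ Finset.range n, ((m : ℝ) + 1) ^ (-(lam + α)) := by
  induction n generalizing p with
  | zero => simp [rsSum, h0, hn]
  | succ n ih =>
    have hmem : ∀ k ≤ n + 2, p k ∈ Icc a b := fun k hk => h0 ▸ hn ▸ partition_mem_Icc hp hk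
    obtain ⟨j, hj, hgap⟩ := exists_two_step_le hp
    obtain ⟨m, rfl⟩ : ∃ m, n = j + m := ⟨n - j, by omega⟩
    have hIH := ih (eraseNode p (j + 1)) (by rw [eraseNode_of_lt (Nat.succ_pos j), h0])
      (by rw [eraseNode_of_le (by omega), hn]) (eraseNode_lt_succ hp)
    have hcost : ‖(σ (p (j + 1)) - σ (p j)) (g (p (j + 2)) - g (p (j + 1)))‖
        ≤ Hσ * Λ * (2 * (b - a)) ^ (lam + α) * ((j + m : ℕ) + 1 : ℝ) ^ (-(lam + α)) := by
      refine (norm_sub_apply_sub_le hσ hg hHσ hΛ hα hlam (hmem j (by omega)).1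
        (hp j (by omega)).le (hp (j + 1) (by omega)).le (hmem (j + 2) (by omega)).2).trans ?_
      have hab : a ≤ b := h0 ▸ (hmem 0 (by omega)).2
      rw [mul_assoc _ ((2 * (b - a)) ^ (lam + α)), Real.rpow_neg (by positivity),
        ← div_eq_mul_inv, ← Real.div_rpow (by linarith) (by positivity)]
      gcongr
      · linarith [hp j (by omega), hp (j + 1) (by omega)]
      · rwa [h0, show j + m + 2 = j + m + 1 + 1 by omega, hn] at hgap
    rw [show j + m + 1 + 1 = j + m + 2 by omega, rsSum_eq_rsSum_eraseNode_add,
      Finset.sum_range_succ, mul_add]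
    calc _ = ‖(rsSum σ g (j + m + 1) (eraseNode p (j + 1)) - σ a (g b - g a))
            + (σ (p (j + 1)) - σ (p j)) (g (p (j + 2)) - g (p (j + 1)))‖ := by
          congr 1; abel
      _ ≤ _ := (norm_add_le _ _).trans (add_le_add hIH hcost)

lemma summable_nat_add_one_rpow_neg {θ : ℝ} (hθ : 1 < θ) :
    Summable fun m : ℕ => ((m : ℝ) + 1) ^ (-θ) := by
  have h := (summable_nat_add_iff 1).2 (Real.summable_nat_rpow.2 (by linarith : -θ < -1))
  simpa only [Nat.cast_add, Nat.cast_one] using h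

def ApproxByRSSums (σ : ℝ → Vec d →L[ℝ] Vec d) (g : ℝ → Vec d) (a b : ℝ) (I : Vec d) : Prop :=
  ∀ ε > 0, ∃ (n : ℕ) (p : ℕ → ℝ), p 0 = a ∧ p (n + 1) = b ∧ (∀ k < n + 1, p k < p (k + 1)) ∧
    ‖rsSum σ g (n + 1) p - I‖ ≤ ε

lemma ApproxByRSSums.norm_sub_le {I : Vec d} (hI : ApproxByRSSums σ g a b I)
    (hσ : ∀ s ∈ Icc a b, ∀ t ∈ Icc a b, ‖σ t - σ s‖ ≤ Hσ * |t - s| ^ α)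
    (hg : ∀ s ∈ Icc a b, ∀ t ∈ Icc a b, ‖g t - g s‖ ≤ Λ * |t - s| ^ lam)
    (hHσ : 0 ≤ Hσ) (hΛ : 0 ≤ Λ) (hα : 0 ≤ α) (hlam : 0 ≤ lam) (hθ : 1 < lam + α) :
    ‖I - σ a (g b - g a)‖
      ≤ Hσ * Λ * (2 * (b - a)) ^ (lam + α) * ∑' m : ℕ, ((m : ℝ) + 1) ^ (-(lam + α)) := by
  refine le_of_forall_pos_le_add fun ε hε => ?_
  obtain ⟨n, p, h0, hn, hp, hclose⟩ := hI ε hε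
  have hab : a ≤ b := h0 ▸ hn ▸ (partition_mem_Icc hp le_rfl).1
  have hpartial := Summable.sum_le_tsum (Finset.range n) (fun m _ => by positivity)
    (summable_nat_add_one_rpow_neg hθ)
  calc ‖I - σ a (g b - g a)‖
      ≤ ‖rsSum σ g (n + 1) p - I‖ + ‖rsSum σ g (n + 1) p - σ a (g b - g a)‖ := by
        rw [← norm_neg (rsSum σ g (n + 1) p - I)]
        exact (norm_add_le _ _).trans_eq' (by abel_nf)
    _ ≤ ε + Hσ * Λ * (2 * (b - a)) ^ (lam + α) * ∑' m : ℕ, ((m : ℝ) + 1) ^ (-(lam + α)) := by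
        refine add_le_add hclose ((norm_rsSum_sub_le hσ hg hHσ hΛ hα hlam n p h0 hn hp).trans ?_)
        have : 0 ≤ (2 * (b - a)) ^ (lam + α) := Real.rpow_nonneg (by linarith) _
        gcongr
    _ = _ := add_comm _ _

end Young

section RSIntegral

variable {d : ℕ} {σ : ℝ → Vec d →L[ℝ] Vec d} {g : ℝ → Vec d}

lemma exists_partition_mesh_lt {a b δ : ℝ} (hab : a < b) (hδ : 0 < δ) :
    ∃ (n : ℕ) (p : ℕ → ℝ), p 0 = a ∧ p (n + 1) = b ∧ (∀ k < n + 1, p k < p (k + 1)) ∧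
      ∀ k < n + 1, p (k + 1) - p k < δ := by
  obtain ⟨n, hn⟩ := exists_nat_gt ((b - a) / δ)
  have hstep : ∀ k : ℕ, a + (b - a) * (k + 1 : ℕ) / (n + 1) - (a + (b - a) * k / (n + 1))
      = (b - a) / (n + 1) := fun k => by push_cast; ring
  refine ⟨n, fun k => a + (b - a) * k / (n + 1), by simp, ?_, fun k _ => ?_, fun k _ => ?_⟩
  · simp only [Nat.cast_add_one]
    field_simp
    ring
  · linarith [hstep k, div_pos (sub_pos.2 hab) (n.cast_add_one_pos : (0 : ℝ) < n + 1)]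
  · rw [hstep, div_lt_iff₀ n.cast_add_one_pos]
    rw [div_lt_iff₀ hδ] at hn
    nlinarith

def concatPartition (r q : ℕ → ℝ) (m : ℕ) : ℕ → ℝ := fun k => if k ≤ m then r k else q (k - m)

lemma concatPartition_of_le {r q : ℕ → ℝ} {m k : ℕ} (hk : k ≤ m) :
    concatPartition r q m k = r k := if_pos hk

lemma concatPartition_add {r q : ℕ → ℝ} {m : ℕ} (h : r m = q 0) (k : ℕ) :
    concatPartition r q m (m + k) = q k := by
  rcases Nat.eq_zero_or_pos k with rfl | hk
  · rw [add_zero, concatPartition_of_le le_rfl, h]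
  · rw [concatPartition, if_neg (by omega), Nat.add_sub_cancel_left]

lemma concatPartition_rel {R : ℝ → ℝ → Prop} {r q : ℕ → ℝ} {m n : ℕ} (h : r m = q 0)
    (hr : ∀ k < m, R (r k) (r (k + 1))) (hq : ∀ k < n, R (q k) (q (k + 1))) :
    ∀ k < m + n, R (concatPartition r q m k) (concatPartition r q m (k + 1)) := by
  intro k hk
  rcases Nat.lt_or_ge k m with hkm | hkm
  · rw [concatPartition_of_le hkm.le, concatPartition_of_le hkm]
    exact hr k hkm
  · obtain ⟨i, rfl⟩ := Nat.exists_eq_add_of_le hkm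
    rw [concatPartition_add h, add_assoc, concatPartition_add h]
    exact hq i (by omega)

lemma rsSum_concatPartition {r q : ℕ → ℝ} {m n : ℕ} (h : r m = q 0) :
    rsSum σ g (m + n) (concatPartition r q m) = rsSum σ g m r + rsSum σ g n q := by
  rw [rsSum, Finset.sum_range_add, ← rsSum, rsSum_congr fun k hk => concatPartition_of_le hk]
  congr 1
  exact Finset.sum_congr rfl fun k _ => by
    rw [add_assoc, concatPartition_add h, concatPartition_add h]

lemma IsRSIntegral.eq_zero {a : ℝ} {I : Vec d} (hI : IsRSIntegral σ g a a I) : I = 0 := by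
  refine norm_le_zero_iff.1 (le_of_forall_pos_le_add fun ε hε => ?_)
  obtain ⟨δ, -, hp⟩ := hI ε hε
  have := hp 0 (fun _ => a) rfl rfl (by omega) (by omega)
  rw [rsSum, Finset.sum_range_zero, zero_sub, norm_neg] at this
  linarith

lemma IsRSIntegral.approxByRSSums {a b : ℝ} {I : Vec d} (hI : IsRSIntegral σ g a b I)
    (hab : a < b) : ApproxByRSSums σ g a b I := by
  intro ε hε
  obtain ⟨δ, hδ, hp⟩ := hI ε hε
  obtain ⟨n, p, h0, hn, hmono, hmesh⟩ := exists_partition_mesh_lt hab hδ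
  exact ⟨n, p, h0, hn, hmono, (hp (n + 1) p h0 hn hmono hmesh).le⟩

/-- A fine partition of `[a, t]` through `s` is the concatenation of fine partitions of `[a, s]`
and `[s, t]`. -/
lemma IsRSIntegral.approxByRSSums_sub {a s t : ℝ} {Is It : Vec d}
    (hIs : IsRSIntegral σ g a s Is) (hIt : IsRSIntegral σ g a t It) (has : a ≤ s) (hst : s < t) :
    ApproxByRSSums σ g s t (It - Is) := by
  rcases has.eq_or_lt with rfl | has
  · rw [hIs.eq_zero, sub_zero]
    exact hIt.approxByRSSums hst
  intro ε hε
  obtain ⟨δs, hδs, hps⟩ := hIs (ε / 2) (half_pos hε)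
  obtain ⟨δt, hδt, hpt⟩ := hIt (ε / 2) (half_pos hε)
  obtain ⟨m, r, hr0, hrm, hrmono, hrmesh⟩ := exists_partition_mesh_lt has (lt_min hδs hδt)
  obtain ⟨n, q, hq0, hqn, hqmono, hqmesh⟩ := exists_partition_mesh_lt hst (lt_min hδs hδt)
  have hrq : r (m + 1) = q 0 := hrm.trans hq0.symm
  have hS := hpt (m + 1 + (n + 1)) (concatPartition r q (m + 1))
    (by rw [concatPartition_of_le (Nat.zero_le _), hr0])
    (by rw [concatPartition_add hrq, hqn]) (concatPartition_rel hrq hrmono hqmono)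
    fun k hk => (concatPartition_rel (R := fun x y => y - x < min δs δt) hrq hrmesh hqmesh k
      hk).trans_le (min_le_right _ _)
  have hR := hps (m + 1) r hr0 hrm hrmono fun k hk => (hrmesh k hk).trans_le (min_le_left _ _)
  refine ⟨n, q, hq0, hqn, hqmono, ?_⟩
  rw [rsSum_concatPartition hrq] at hS
  calc ‖rsSum σ g (n + 1) q - (It - Is)‖
      = ‖(rsSum σ g (m + 1) r + rsSum σ g (n + 1) q - It) - (rsSum σ g (m + 1) r - Is)‖ := by
        congr 1; abel
    _ ≤ ε := (norm_sub_le _ _).trans (by linarith)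

end RSIntegral

section Noise

variable {d : ℕ} {σ : ℝ → Vec d →L[ℝ] Vec d} {g : ℝ → Vec d} {a T Cσ Hσ Λ lam α : ℝ}

lemma norm_sub_le_of_isRSIntegral {N : ℝ → Vec d}
    (hN : ∀ u ∈ Icc a T, IsRSIntegral σ g a u (N u)) (hσb : ∀ u ∈ Icc a T, ‖σ u‖ ≤ Cσ)
    (hσ : ∀ s ∈ Icc a T, ∀ t ∈ Icc a T, ‖σ t - σ s‖ ≤ Hσ * |t - s| ^ α)
    (hg : ∀ s ∈ Icc a T, ∀ t ∈ Icc a T, ‖g t - g s‖ ≤ Λ * |t - s| ^ lam)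
    (hHσ : 0 ≤ Hσ) (hΛ : 0 ≤ Λ) (hα : 0 ≤ α) (hlam : 0 < lam) (hθ : 1 < lam + α)
    {s t : ℝ} (hs : a ≤ s) (hst : s ≤ t) (ht : t ≤ T) :
    ‖N t - N s‖ ≤ (Cσ * (t - s) ^ lam + Hσ * 2 ^ (lam + α)
      * (∑' m : ℕ, ((m : ℝ) + 1) ^ (-(lam + α))) * (t - s) ^ (lam + α)) * Λ := by
  rcases hst.eq_or_lt with rfl | hst
  · simp [Real.zero_rpow hlam.ne', Real.zero_rpow (by linarith : lam + α ≠ 0)]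
  have hsub : Icc s t ⊆ Icc a T := Icc_subset_Icc hs ht
  have hYoung := ((hN s ⟨hs, by linarith⟩).approxByRSSums_sub (hN t ⟨by linarith, ht⟩) hs
    hst).norm_sub_le (fun u hu v hv => hσ u (hsub hu) v (hsub hv))
    (fun u hu v hv => hg u (hsub hu) v (hsub hv)) hHσ hΛ hα hlam.le hθ
  have hfirst : ‖σ s (g t - g s)‖ ≤ Cσ * (Λ * (t - s) ^ lam) := by
    refine (ContinuousLinearMap.le_opNorm _ _).trans (mul_le_mul (hσb s ⟨hs, by linarith⟩) ?_
      (norm_nonneg _) ((norm_nonneg _).trans (hσb s ⟨hs, by linarith⟩)))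
    simpa [abs_of_pos (sub_pos.2 hst)] using hg s ⟨hs, by linarith⟩ t ⟨by linarith, ht⟩
  rw [Real.mul_rpow zero_le_two (sub_pos.2 hst).le] at hYoung
  calc ‖N t - N s‖ ≤ ‖σ s (g t - g s)‖ + ‖N t - N s - σ s (g t - g s)‖ :=
        norm_le_norm_add_norm_sub' _ _
    _ ≤ _ := by linarith

end Noise

section Holder

lemma holderSemi_nonneg {d : ℕ} (lam T : ℝ) (f : ℝ → Vec d) : 0 ≤ holderSemi lam T f :=
  Real.sSup_nonneg (by
    rintro r ⟨s, t, -, hst, -, rfl⟩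
    exact div_nonneg (norm_nonneg _) (Real.rpow_nonneg (sub_nonneg.2 hst.le) _))

lemma norm_sub_le_holderSemi_mul {d : ℕ} {lam T : ℝ} {f : ℝ → Vec d}
    (hf : ∃ C, ∀ s ∈ Icc (0 : ℝ) T, ∀ t ∈ Icc (0 : ℝ) T, ‖f t - f s‖ ≤ C * |t - s| ^ lam)
    {s t : ℝ} (hs : s ∈ Icc 0 T) (ht : t ∈ Icc 0 T) :
    ‖f t - f s‖ ≤ holderSemi lam T f * |t - s| ^ lam := by
  wlog hst : s ≤ t generalizing s t
  · rw [norm_sub_rev, abs_sub_comm]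
    exact this ht hs (le_of_not_ge hst)
  rcases hst.eq_or_lt with rfl | hst
  · simpa using mul_nonneg (holderSemi_nonneg lam T f) (Real.rpow_nonneg le_rfl lam)
  obtain ⟨C, hC⟩ := hf
  have hpos : 0 < |t - s| ^ lam := Real.rpow_pos_of_pos (abs_pos.2 (sub_ne_zero.2 hst.ne')) _
  have hbdd : BddAbove
      {r : ℝ | ∃ s t : ℝ, 0 ≤ s ∧ s < t ∧ t ≤ T ∧ r = ‖f t - f s‖ / (t - s) ^ lam} := by
    refine ⟨C, ?_⟩
    rintro r ⟨s', t', hs', hst', ht', rfl⟩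
    rw [div_le_iff₀ (Real.rpow_pos_of_pos (sub_pos.2 hst') _)]
    simpa [abs_of_pos (sub_pos.2 hst')] using hC s' ⟨hs', by linarith⟩ t' ⟨by linarith, ht'⟩
  rw [← div_le_iff₀ hpos, abs_of_pos (sub_pos.2 hst)]
  exact le_csSup hbdd ⟨s, t, hs.1, hst, ht.2, rfl⟩

lemma ContinuousLinearMap.norm_sub_le_of_comp_eq_id {𝕜 E F : Type*} [NontriviallyNormedField 𝕜]
    [NormedAddCommGroup E] [NormedSpace 𝕜 E] [NormedAddCommGroup F] [NormedSpace 𝕜 F]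
    {A B : E →L[𝕜] F} {A' B' : F →L[𝕜] E} (hA : A.comp A' = .id 𝕜 F) (hB : B'.comp B = .id 𝕜 E) :
    ‖A - B‖ ≤ ‖A‖ * ‖B' - A'‖ * ‖B‖ := by
  have hfactor : A - B = A.comp ((B' - A').comp B) := by
    ext v
    have h₁ := DFunLike.congr_fun hB v
    have h₂ := DFunLike.congr_fun hA (B v)
    simp only [ContinuousLinearMap.comp_apply, ContinuousLinearMap.id_apply] at h₁ h₂
    simp [h₁, h₂]
  rw [hfactor, mul_assoc]
  exact (A.opNorm_comp_le _).trans (by gcongr; exact ContinuousLinearMap.opNorm_comp_le _ _)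

lemma holder_of_holder_inverse {E : Type*} [NormedAddCommGroup E] [NormedSpace ℝ E]
    {σ σinv : ℝ → E →L[ℝ] E} {S : Set ℝ} {Cσ K' α : ℝ} (hσb : ∀ t ∈ S, ‖σ t‖ ≤ Cσ)
    (hinv : ∀ t ∈ S, (σ t).comp (σinv t) = .id ℝ E ∧ (σinv t).comp (σ t) = .id ℝ E)
    (hσinv : ∀ s ∈ S, ∀ t ∈ S, ‖σinv t - σinv s‖ ≤ K' * |t - s| ^ α) :
    ∀ s ∈ S, ∀ t ∈ S, ‖σ t - σ s‖ ≤ Cσ ^ 2 * K' * |t - s| ^ α := fun s hs t ht =>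
  calc ‖σ t - σ s‖ ≤ ‖σ t‖ * ‖σinv s - σinv t‖ * ‖σ s‖ :=
        ContinuousLinearMap.norm_sub_le_of_comp_eq_id (hinv t ht).1 (hinv s hs).2
    _ ≤ Cσ * (K' * |t - s| ^ α) * Cσ := by
        have hCσ : 0 ≤ Cσ := (norm_nonneg _).trans (hσb s hs)
        have hdiff : ‖σinv s - σinv t‖ ≤ K' * |t - s| ^ α :=
          norm_sub_rev (σinv s) _ ▸ hσinv s hs t ht
        exact mul_le_mul (mul_le_mul (hσb t ht) hdiff (norm_nonneg _) hCσ) (hσb s hs)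
          (norm_nonneg _) (mul_nonneg hCσ ((norm_nonneg _).trans hdiff))
    _ = Cσ ^ 2 * K' * |t - s| ^ α := by ring

end Holder

section Gronwall

lemma le_mul_exp_of_le_add_integral {φ : ℝ → ℝ} {A K T : ℝ} (hφ : Continuous φ) (hK : 0 ≤ K)
    (h : ∀ u ∈ Icc 0 T, φ u ≤ A + K * ∫ v in (0 : ℝ)..u, φ v) :
    ∀ u ∈ Icc 0 T, φ u ≤ A * Real.exp (K * u) := by
  set F : ℝ → ℝ := fun u => A + K * ∫ v in (0 : ℝ)..u, φ v
  have hF : ∀ u, HasDerivAt F (K * φ u) u := fun u =>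
    ((intervalIntegral.integral_hasDerivAt_right (hφ.intervalIntegrable _ _)
      (hφ.stronglyMeasurableAtFilter _ _) hφ.continuousAt).const_mul K).const_add A
  have hbound := le_gronwallBound_of_liminf_deriv_right_le (f := F) (f' := fun u => K * φ u)
    (δ := A) (K := K) (ε := 0) (a := 0) (b := T)
    (fun u _ => (hF u).continuousAt.continuousWithinAt)
    (fun u _ _ hr => (hF u).hasDerivWithinAt.liminf_right_slope_le hr)
    (by simp [F])
    (fun u hu => by simpa using mul_le_mul_of_nonneg_left (h u (Ico_subset_Icc_self hu)) hK)
  intro u hu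
  simpa [gronwallBound_ε0] using (h u hu).trans (hbound u hu)

end Gronwall

section Drift

variable {E : Type*} [NormedAddCommGroup E] [NormedSpace ℝ E] {b : E → E} {K : ℝ≥0}
  {X N : ℝ → E} {x : E} {T : ℝ} {ρ : ℝ → ℝ}

lemma norm_sub_initial_le_of_lipschitz_drift (hb : LipschitzWith K b) (hX : Continuous X)
    (hX0 : X 0 = x) (hXN : ∀ u ∈ Icc 0 T, X u = x + (∫ v in (0 : ℝ)..u, b (X v)) + N u)
    (hN : ∀ s t, 0 ≤ s → s ≤ t → t ≤ T → ‖N t - N s‖ ≤ ρ (t - s))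
    (hρ : MonotoneOn ρ (Icc 0 T)) {u : ℝ} (hu : u ∈ Icc 0 T) :
    ‖X u - x‖ ≤ (‖b x‖ * T + ρ T) * Real.exp (K * T) := by
  have hT : 0 ≤ T := hu.1.trans hu.2
  have hN0 : N 0 = 0 := by simpa [hX0] using hXN 0 ⟨le_rfl, hT⟩
  have hNu : ∀ u ∈ Icc 0 T, ‖N u‖ ≤ ρ T := fun u hu => by
    have h := hN 0 u le_rfl hu.1 hu.2
    rw [hN0, sub_zero, sub_zero] at h
    exact h.trans (hρ hu ⟨hT, le_rfl⟩ hu.2)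
  have hA : 0 ≤ ‖b x‖ * T + ρ T := by
    have := (norm_nonneg _).trans (hNu T ⟨hT, le_rfl⟩)
    positivity
  have hφ : Continuous fun u => ‖X u - x‖ := (hX.sub continuous_const).norm
  refine (le_mul_exp_of_le_add_integral (A := ‖b x‖ * T + ρ T) hφ K.coe_nonneg
    (fun u hu => ?_) u hu).trans
    (mul_le_mul_of_nonneg_left (Real.exp_le_exp.2 (by gcongr; exact hu.2)) hA)
  have hint : ‖∫ v in (0 : ℝ)..u, b (X v)‖
      ≤ ‖b x‖ * u + K * ∫ v in (0 : ℝ)..u, ‖X v - x‖ := by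
    refine (intervalIntegral.norm_integral_le_integral_norm hu.1).trans ?_
    refine (intervalIntegral.integral_mono_on hu.1
      ((show Continuous fun v => b (X v) from hb.continuous.comp hX).norm.intervalIntegrable _ _)
      ((by fun_prop : Continuous fun v => ‖b x‖ + K * ‖X v - x‖).intervalIntegrable _ _)
      fun v _ => ?_).trans_eq ?_
    · linarith [norm_le_norm_add_norm_sub' (b (X v)) (b x), hb.norm_sub_le (X v) x]
    · rw [intervalIntegral.integral_add intervalIntegrable_const
        ((by fun_prop : Continuous fun v => K * ‖X v - x‖).intervalIntegrable _ _),
        intervalIntegral.integral_const, intervalIntegral.integral_const_mul, smul_eq_mul,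
        sub_zero, mul_comm]
  rw [show X u - x = (∫ v in (0 : ℝ)..u, b (X v)) + N u by rw [hXN u hu]; abel]
  have := mul_le_mul_of_nonneg_left hu.2 (norm_nonneg (b x))
  linarith [norm_add_le (∫ v in (0 : ℝ)..u, b (X v)) (N u), hNu u hu]

lemma norm_sub_le_of_lipschitz_drift (hb : LipschitzWith K b) (hX : Continuous X)
    (hX0 : X 0 = x) (hXN : ∀ u ∈ Icc 0 T, X u = x + (∫ v in (0 : ℝ)..u, b (X v)) + N u)
    (hN : ∀ s t, 0 ≤ s → s ≤ t → t ≤ T → ‖N t - N s‖ ≤ ρ (t - s))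
    (hρ : MonotoneOn ρ (Icc 0 T)) {s t : ℝ} (hs : 0 ≤ s) (hst : s ≤ t) (ht : t ≤ T) :
    ‖X t - X s‖
      ≤ (‖b x‖ + K * ((‖b x‖ * T + ρ T) * Real.exp (K * T))) * (t - s) + ρ (t - s) := by
  have hbX : Continuous fun v => b (X v) := hb.continuous.comp hX
  have hdrift : ‖∫ v in s..t, b (X v)‖
      ≤ (‖b x‖ + K * ((‖b x‖ * T + ρ T) * Real.exp (K * T))) * |t - s| := by
    refine intervalIntegral.norm_integral_le_of_norm_le_const fun v hv => ?_
    rw [uIoc_of_le hst] at hv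
    have hXv := norm_sub_initial_le_of_lipschitz_drift hb hX hX0 hXN hN hρ
      ⟨hs.trans hv.1.le, hv.2.trans ht⟩
    linarith [norm_le_norm_add_norm_sub' (b (X v)) (b x), hb.norm_sub_le (X v) x,
      mul_le_mul_of_nonneg_left hXv K.coe_nonneg]
  have hsplit : X t - X s = (∫ v in s..t, b (X v)) + (N t - N s) := by
    rw [hXN t ⟨by linarith, ht⟩, hXN s ⟨hs, by linarith⟩,
      ← intervalIntegral.integral_interval_sub_left (hbX.intervalIntegrable 0 t)
        (hbX.intervalIntegrable 0 s)]
    abel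
  rw [abs_of_nonneg (sub_nonneg.2 hst)] at hdrift
  rw [hsplit]
  exact (norm_add_le _ _).trans (add_le_add hdrift (hN s t hs hst ht))

end Drift

section Arithmetic

lemma drift_noise_bound_le {β K Cσ Y Λ E T ξ u P Q p q : ℝ} (hβ : 0 ≤ β) (hK : 0 ≤ K)
    (hCσ : 0 ≤ Cσ) (hY : 0 ≤ Y) (hΛ : 0 ≤ Λ) (hE : 0 ≤ E) (hT : 0 ≤ T) (hξ : 0 ≤ ξ) (hu : 0 ≤ u)
    (hP : 0 ≤ P) (hQ : 0 ≤ Q) (hp : 0 ≤ p) (hq : 0 ≤ q) :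
    (β + K * ((β * T + (Cσ * P + Y * Q) * Λ) * E)) * u + (Cσ * p + Y * q) * Λ
      ≤ (1 + K) * (1 + β + Cσ + Y)
        * ((1 + E * (ξ + T)) * u + E * Λ * (P + Q) * u + Λ * (p + q)) := by
  rw [← sub_nonneg]
  ring_nf
  positivity

lemma rpow_add_le_mul_rpow {u T β γ : ℝ} (hu : 0 ≤ u) (huT : u ≤ T) (hβ : 0 ≤ β) (hγ : 0 ≤ γ) :
    u ^ (γ + β) ≤ T ^ β * u ^ γ := by
  rw [Real.rpow_add_of_nonneg hu hγ hβ, mul_comm]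
  gcongr

lemma add_rpow_bound_le {A E P Λ u T lam α : ℝ} (hA : 0 ≤ A) (hE : 0 ≤ E) (hP : 0 ≤ P)
    (hΛ : 0 ≤ Λ) (hu : 0 ≤ u) (huT : u ≤ T) (hlam : 0 ≤ lam) (hlam1 : lam ≤ 1) (hα : 0 ≤ α) :
    A * u + E * Λ * P * u + Λ * (u ^ lam + u ^ (lam + α))
      ≤ (A + E * P * T ^ (1 - lam) + 1 + T ^ α) * (u + Λ * u ^ lam) := by
  have hT : 0 ≤ T := hu.trans huT
  have h1 : u ≤ T ^ (1 - lam) * u ^ lam := by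
    simpa using rpow_add_le_mul_rpow hu huT (sub_nonneg.2 hlam1) hlam
  have h2 := rpow_add_le_mul_rpow hu huT hα hlam
  have h3 : E * Λ * P * u ≤ E * P * T ^ (1 - lam) * (Λ * u ^ lam) := by
    calc E * Λ * P * u ≤ E * Λ * P * (T ^ (1 - lam) * u ^ lam) := by gcongr
      _ = _ := by ring
  have h4 : Λ * u ^ (lam + α) ≤ T ^ α * (Λ * u ^ lam) := by
    calc Λ * u ^ (lam + α) ≤ Λ * (T ^ α * u ^ lam) := by gcongr
      _ = _ := by ring
  have : 0 ≤ A * (Λ * u ^ lam) + E * P * T ^ (1 - lam) * u + u + T ^ α * u := by positivity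
  nlinarith

end Arithmetic

lemma SolvesSDE.isRSIntegral {Ω : Type*} {d : ℕ} {T : ℝ} {b : Vec d → Vec d}
    {σ : ℝ → Vec d →L[ℝ] Vec d} {B : ℝ → Ω → Vec d} {x : Vec d} {X : ℝ → Ω → Vec d}
    (hX : SolvesSDE T b σ B x X) (ω : Ω) :
    ∀ u ∈ Icc 0 T,
      IsRSIntegral σ (fun s => B s ω) 0 u (X u ω - x - ∫ v in (0 : ℝ)..u, b (X v ω)) :=
  fun u hu => by
    obtain ⟨I, hI, hXu⟩ := (hX ω).2.2 u hu
    rwa [hXu, add_assoc, add_sub_cancel_left, add_sub_cancel_left]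

theorem holder_estimate_fbm_sde_general
    {Ω : Type*}
    (d : ℕ) (H T : ℝ) (hH1 : H < 1) (hT : 0 < T)
    (B : ℝ → Ω → Vec d)
    (b : Vec d → Vec d) (σ : ℝ → Vec d →L[ℝ] Vec d)
    -- hypothesis (H1)(i)
    (K : ℝ) (hK : 0 < K) (hb : Differentiable ℝ b) (hbK : ∀ y, ‖fderiv ℝ b y‖ ≤ K)
    -- hypothesis (H1)(ii)
    (Cσ : ℝ) (hσbd : ∀ t ∈ Set.Icc (0:ℝ) T, ‖σ t‖ ≤ Cσ)
    (σinv : ℝ → Vec d →L[ℝ] Vec d)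
    (hσinv : ∀ t ∈ Set.Icc (0:ℝ) T,
      (σ t).comp (σinv t) = ContinuousLinearMap.id ℝ (Vec d) ∧
      (σinv t).comp (σ t) = ContinuousLinearMap.id ℝ (Vec d))
    (K' α0 : ℝ) (hK' : 0 < K') (hα0 : H - 1/2 < α0 ∧ α0 ≤ 1)
    (hσH : ∀ s ∈ Set.Icc (0:ℝ) T, ∀ t ∈ Set.Icc (0:ℝ) T,
      ‖σinv t - σinv s‖ ≤ K' * |t - s| ^ α0)
    -- hypothesis (H2)
    (L β0 : ℝ)
    -- the exponent λ0
    (lam0 : ℝ) (hlam0 : 1 - α0 < lam0 ∧ lam0 < H ∧ H - 1/2 < lam0 * β0)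
    -- the solution
    (x : Vec d) (X : ℝ → Ω → Vec d) (hX : SolvesSDE T b σ B x X) :
    ∃ C > 0, ∃ CT > 0, ∀ ω,
      (∃ Cw, ∀ s ∈ Set.Icc (0:ℝ) T, ∀ t ∈ Set.Icc (0:ℝ) T,
        ‖B t ω - B s ω‖ ≤ Cw * |t - s| ^ lam0) →
      ∀ s ∈ Set.Icc (0:ℝ) T, ∀ t ∈ Set.Icc (0:ℝ) T, s ≤ t →
        (‖X t ω - X s ω‖ ≤ C *
          ((1 + Real.exp (K*T) * (‖x‖ + T)) * (t - s)
            + Real.exp (K*T) * holderSemi lam0 T (fun u => B u ω)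
                * (T ^ lam0 + T ^ (lam0 + α0)) * (t - s)
            + holderSemi lam0 T (fun u => B u ω)
                * ((t - s) ^ lam0 + (t - s) ^ (lam0 + α0)))) ∧
        C * ((1 + Real.exp (K*T) * (‖x‖ + T)) * (t - s)
            + Real.exp (K*T) * holderSemi lam0 T (fun u => B u ω)
                * (T ^ lam0 + T ^ (lam0 + α0)) * (t - s)
            + holderSemi lam0 T (fun u => B u ω)
                * ((t - s) ^ lam0 + (t - s) ^ (lam0 + α0)))
          ≤ CT * ((t - s) + holderSemi lam0 T (fun u => B u ω) * (t - s) ^ lam0) := by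
  obtain ⟨hα0pos, hlam0pos, hlam1, hθ⟩ : 0 < α0 ∧ 0 < lam0 ∧ lam0 ≤ 1 ∧ 1 < lam0 + α0 := by
    refine ⟨?_, ?_, ?_, ?_⟩ <;> linarith [hα0.1, hα0.2, hlam0.1, hlam0.2.1]
  have hCσ : 0 ≤ Cσ := (norm_nonneg _).trans (hσbd 0 ⟨le_rfl, hT.le⟩)
  have hbLip : LipschitzWith K.toNNReal b := lipschitzWith_of_nnnorm_fderiv_le hb fun y => by
    rw [← NNReal.coe_le_coe, coe_nnnorm, Real.coe_toNNReal _ hK.le]; exact hbK y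
  have hσHolder := holder_of_holder_inverse hσbd hσinv hσH
  set Y := Cσ ^ 2 * K' * 2 ^ (lam0 + α0) * ∑' m : ℕ, ((m : ℝ) + 1) ^ (-(lam0 + α0))
  have hY : 0 ≤ Y := by positivity
  set C := (1 + K) * (1 + ‖b x‖ + Cσ + Y)
  refine ⟨C, by positivity, C * ((1 + Real.exp (K * T) * (‖x‖ + T)) + Real.exp (K * T)
    * (T ^ lam0 + T ^ (lam0 + α0)) * T ^ (1 - lam0) + 1 + T ^ α0), by positivity,
    fun ω hB s hs t ht hst => ?_⟩
  set Λ := holderSemi lam0 T (fun u => B u ω)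
  have hΛ : 0 ≤ Λ := holderSemi_nonneg _ _ _
  set ρ : ℝ → ℝ := fun u => (Cσ * u ^ lam0 + Y * u ^ (lam0 + α0)) * Λ
  have hnoise := fun s t (hs : 0 ≤ s) (hst : s ≤ t) (ht : t ≤ T) =>
    norm_sub_le_of_isRSIntegral (hX.isRSIntegral ω) hσbd hσHolder
      (fun s hs t ht => norm_sub_le_holderSemi_mul hB hs ht) (by positivity) hΛ hα0pos.le
      hlam0pos hθ hs hst ht
  have hρ : MonotoneOn ρ (Icc 0 T) := fun u hu v _ huv => by
    have := hu.1
    dsimp only [ρ]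
    gcongr
  have hincr := norm_sub_le_of_lipschitz_drift hbLip (hX ω).1 (hX ω).2.1 (fun u _ => by abel)
    hnoise hρ hs.1 hst ht.2
  rw [Real.coe_toNNReal _ hK.le] at hincr
  have hts := sub_nonneg.2 hst
  refine ⟨hincr.trans (drift_noise_bound_le (norm_nonneg _) hK.le hCσ hY hΛ (by positivity) hT.le
    (norm_nonneg _) hts (by positivity) (by positivity) (by positivity) (by positivity)), ?_⟩
  refine (mul_le_mul_of_nonneg_left (add_rpow_bound_le (by positivity) (by positivity)
    (by positivity) hΛ hts (by linarith [hs.1, ht.2]) hlam0pos.le hlam1 hα0pos.le)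
    (by positivity)).trans_eq (mul_assoc _ _ _).symm

/-- Lemma 3.2. Under (H1), (H2), with `1 - α0 < λ0 < H` and
`λ0 β0 > H - 1/2`, the solution satisfies, pathwise on every λ0-Hölder path of `B^H`,
`|X_t - X_s| ≤ C{[1+e^{KT}(|x|+T)]|t-s| + e^{KT}‖B^H‖_{λ0}(T^{λ0}+T^{λ0+α0})|t-s|
 + ‖B^H‖_{λ0}(|t-s|^{λ0}+|t-s|^{λ0+α0})} ≤ C(T)(|t-s| + ‖B^H‖_{λ0}|t-s|^{λ0})`. -/
theorem holder_estimate_fbm_sde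
    {Ω : Type*} [MeasurableSpace Ω] (μ : Measure Ω) [IsProbabilityMeasure μ]
    (d : ℕ) (H T : ℝ) (hH : 1/2 < H) (hH1 : H < 1) (hT : 0 < T)
    (B : ℝ → Ω → Vec d) (hB : IsFBM μ d H B)
    (b : Vec d → Vec d) (σ : ℝ → Vec d →L[ℝ] Vec d)
    -- hypothesis (H1)(i)
    (K : ℝ) (hK : 0 < K) (hb : Differentiable ℝ b) (hbK : ∀ y, ‖fderiv ℝ b y‖ ≤ K)
    -- hypothesis (H1)(ii)
    (Cσ : ℝ) (hσbd : ∀ t ∈ Set.Icc (0:ℝ) T, ‖σ t‖ ≤ Cσ)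
    (σinv : ℝ → Vec d →L[ℝ] Vec d)
    (hσinv : ∀ t ∈ Set.Icc (0:ℝ) T,
      (σ t).comp (σinv t) = ContinuousLinearMap.id ℝ (Vec d) ∧
      (σinv t).comp (σ t) = ContinuousLinearMap.id ℝ (Vec d))
    (K' α0 : ℝ) (hK' : 0 < K') (hα0 : H - 1/2 < α0 ∧ α0 ≤ 1)
    (hσH : ∀ s ∈ Set.Icc (0:ℝ) T, ∀ t ∈ Set.Icc (0:ℝ) T,
      ‖σinv t - σinv s‖ ≤ K' * |t - s| ^ α0)
    -- hypothesis (H2)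
    (L β0 : ℝ) (hL : 0 ≤ L) (hβ0 : 1 - 1/(2*H) < β0 ∧ β0 ≤ 1)
    (hbH2 : ∀ y z, ‖fderiv ℝ b y - fderiv ℝ b z‖ ≤ L * ‖y - z‖ ^ β0)
    -- the exponent λ0
    (lam0 : ℝ) (hlam0 : 1 - α0 < lam0 ∧ lam0 < H ∧ H - 1/2 < lam0 * β0)
    -- the solution
    (x : Vec d) (X : ℝ → Ω → Vec d) (hX : SolvesSDE T b σ B x X) :
    ∃ C > 0, ∃ CT > 0, ∀ ω,
      (∃ Cw, ∀ s ∈ Set.Icc (0:ℝ) T, ∀ t ∈ Set.Icc (0:ℝ) T,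
        ‖B t ω - B s ω‖ ≤ Cw * |t - s| ^ lam0) →
      ∀ s ∈ Set.Icc (0:ℝ) T, ∀ t ∈ Set.Icc (0:ℝ) T, s ≤ t →
        (‖X t ω - X s ω‖ ≤ C *
          ((1 + Real.exp (K*T) * (‖x‖ + T)) * (t - s)
            + Real.exp (K*T) * holderSemi lam0 T (fun u => B u ω)
                * (T ^ lam0 + T ^ (lam0 + α0)) * (t - s)
            + holderSemi lam0 T (fun u => B u ω)
                * ((t - s) ^ lam0 + (t - s) ^ (lam0 + α0)))) ∧
        C * ((1 + Real.exp (K*T) * (‖x‖ + T)) * (t - s)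
            + Real.exp (K*T) * holderSemi lam0 T (fun u => B u ω)
                * (T ^ lam0 + T ^ (lam0 + α0)) * (t - s)
            + holderSemi lam0 T (fun u => B u ω)
                * ((t - s) ^ lam0 + (t - s) ^ (lam0 + α0)))
          ≤ CT * ((t - s) + holderSemi lam0 T (fun u => B u ω) * (t - s) ^ lam0) :=
  holder_estimate_fbm_sde_general d H T hH1 hT B b σ K hK hb hbK Cσ hσbd σinv hσinv K' α0 hK' hα0
    hσH L β0 lam0 hlam0 x X hX
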